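/- arXiv:2309.07716 — 3 statements merged into one kernel-verified Lean document; each statement's English description precedes it below -/
import Mathlib

section
/- A vector-valued dense layer y = ψ(Wx + b), where W ∈ V^{M×N}, b ∈ V^M, and ψ is a split activation derived from ψ_ℝ, is emulated exactly by the real-valued dense layer φ(y) = ψ_ℝ(M_L(W)φ(x) + φ(b)). -/
open Matrix BigOperators

/-! Both layers act coordinatewise after the affine part, and a split activation acts on the
coordinates of its argument by `ψℝ`, so it suffices to compare the affine parts. In coordinates,
`v ↦ w * v` is multiplication by the matrix of `mul w`; summing over the inputs `j` assembles
these matrices into the block matrix `M_L(W)`. -/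

namespace Module.Basis

variable {ι κ R M : Type*} [Fintype ι] [Fintype κ] [CommSemiring R] [AddCommMonoid M]
  [Module R M]

theorem repr_apply_eq_sum_repr_mul (e : Basis ι R M) (f : M →ₗ[R] M) (v : M) (k : ι) :
    e.repr (f v) k = ∑ c, e.repr (f (e c)) k * e.repr v c := by
  classical
  rw [← LinearMap.toMatrix_mulVec_repr e e f v]
  simp only [mulVec, dotProduct, LinearMap.toMatrix_apply]

theorem repr_sum_apply_eq_mulVec (e : Basis ι R M) (L : κ → M →ₗ[R] M) (x : κ → M)
    (A : Matrix ι (κ × ι) R) (hA : ∀ k j c, A k (j, c) = e.repr (L j (e c)) k)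
    (φx : κ × ι → R) (hφx : ∀ j c, φx (j, c) = e.repr (x j) c) (k : ι) :
    (A *ᵥ φx) k = e.repr (∑ j, L j (x j)) k := by
  simp only [mulVec, dotProduct, Fintype.sum_prod_type, hA, hφx, map_sum,
    Finsupp.coe_finsetSum, Finset.sum_apply]
  exact Finset.sum_congr rfl fun j _ => (e.repr_apply_eq_sum_repr_mul (L j) (x j) k).symm

end Module.Basis

/-- A vector-valued dense layer `y = ψ(Wx + b)` with split activation
`ψ` derived from `ψℝ` is emulated exactly by the real-valued dense layer
`φ(y) = ψℝ(M_L(W) φ(x) + φ(b))`. -/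
theorem stmt_17 {n M N : ℕ} {V : Type*} [AddCommGroup V] [Module ℝ V]
    (e : Module.Basis (Fin n) ℝ V) (mul : V →ₗ[ℝ] V →ₗ[ℝ] V)
    (ψℝ : ℝ → ℝ) (ψ : V → V)
    (hψ : ∀ x, ψ x = ∑ i, ψℝ (e.repr x i) • e i)
    (W : Matrix (Fin M) (Fin N) V) (b : Fin M → V) (x : Fin N → V)
    (y : Fin M → V)
    (hy : ∀ i, y i = ψ (∑ j, mul (W i j) (x j) + b i))
    (MLW : Matrix (Fin M × Fin n) (Fin N × Fin n) ℝ)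
    (hMLW : ∀ i k j c, MLW (i, k) (j, c) = e.repr (mul (W i j) (e c)) k)
    (φx : Fin N × Fin n → ℝ) (hφx : ∀ j c, φx (j, c) = e.repr (x j) c) :
    ∀ i k, e.repr (y i) k = ψℝ (MLW.mulVec φx (i, k) + e.repr (b i) k) := by
  intro i k
  have hlinear : MLW.mulVec φx (i, k) = e.repr (∑ j, mul (W i j) (x j)) k :=
    e.repr_sum_apply_eq_mulVec (fun j => mul (W i j)) x (fun k => MLW (i, k)) (hMLW i) φx hφx k
  rw [hy, hψ, e.repr_sum_self, hlinear, map_add, Finsupp.add_apply]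
end

section
/- In a finite-dimensional real algebra, the k-th coordinate of the sum s_i = Σ_j w_{ij} x_j satisfies s_{ki} = Σ_j φ(w_{ij})^T B_k φ(x_j); consequently the k-th component of a vector-valued dense layer output with split activation equals the output of a real-valued dense layer applied to the flattened input φ(x) ∈ ℝ^{nN}. -/
open Matrix BigOperators

/-!
Coordinates turn each product `w * x` into the bilinear form `φ(w)ᵀ B_k φ(x)`, so the `k`-th
coordinate of `s_i` is linear in the flattened input `φ(x)` with weights `(φ(w_{ij})ᵀ B_k)_c`
at position `(j, c)`. A split activation acts coordinatewise, so it commutes with taking the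
`k`-th coordinate.
-/

theorem Module.Basis.repr_sum_mul_apply {R V ι κ : Type*} [CommSemiring R] [AddCommMonoid V]
    [Module R V] [Fintype ι] (e : Module.Basis ι R V) (mul : V →ₗ[R] V →ₗ[R] V)
    (B : ι → Matrix ι ι R)
    (hB : ∀ k a b, e.repr (mul a b) k = (fun i => e.repr a i) ⬝ᵥ B k *ᵥ fun j => e.repr b j)
    (s : Finset κ) (w x : κ → V) (k : ι) :
    e.repr (∑ j ∈ s, mul (w j) (x j)) k =
      ∑ j ∈ s, (fun c => e.repr (w j) c) ⬝ᵥ B k *ᵥ fun c => e.repr (x j) c := by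
  rw [map_sum, Finsupp.finsetSum_apply]
  exact Finset.sum_congr rfl fun j _ => hB k _ _

def flattenedWeight {R ι κ m m' : Type*} [NonUnitalNonAssocSemiring R] [Fintype m]
    (w : ι → κ → m → R) (A : Matrix m m' R) : Matrix ι (κ × m') R :=
  Matrix.of fun i p => (w i p.1 ᵥ* A) p.2

theorem flattenedWeight_mulVec {R ι κ m m' : Type*} [CommSemiring R] [Fintype κ] [Fintype m]
    [Fintype m'] (w : ι → κ → m → R) (A : Matrix m m' R) (x : κ → m' → R) (i : ι) :
    (flattenedWeight w A *ᵥ fun p => x p.1 p.2) i = ∑ j, w i j ⬝ᵥ A *ᵥ x j := by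
  simp only [mulVec, dotProduct, Fintype.sum_prod_type, flattenedWeight, of_apply]
  exact Finset.sum_congr rfl fun j _ => (dotProduct_mulVec (w i j) A (x j)).symm

/-- The `k`-th coordinate of `s i = ∑ j, w i j * x j` satisfies
`s_{k i} = ∑ j, φ(w i j)ᵀ B_k φ(x j)`; consequently the `k`-th component of a
vector-valued dense layer output with split activation equals the output of a
real-valued dense layer applied to the flattened input `φ(x) ∈ ℝ^{nN}`. -/
theorem stmt_18 {n M N : ℕ} {V : Type*} [AddCommGroup V] [Module ℝ V]
    (e : Module.Basis (Fin n) ℝ V) (mul : V →ₗ[ℝ] V →ₗ[ℝ] V)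
    (B : Fin n → Matrix (Fin n) (Fin n) ℝ)
    (hB : ∀ (k : Fin n) (a b : V),
      e.repr (mul a b) k = (fun i => e.repr a i) ⬝ᵥ (B k).mulVec (fun j => e.repr b j))
    (w : Matrix (Fin M) (Fin N) V) (x : Fin N → V) (bias : Fin M → V)
    (s : Fin M → V) (hs : ∀ i, s i = ∑ j, mul (w i j) (x j))
    (ψℝ : ℝ → ℝ) (ψ : V → V)
    (hψ : ∀ v, ψ v = ∑ i, ψℝ (e.repr v i) • e i)
    (y : Fin M → V) (hy : ∀ i, y i = ψ (s i + bias i))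
    (φx : Fin N × Fin n → ℝ) (hφx : ∀ j c, φx (j, c) = e.repr (x j) c)
    (k : Fin n) :
    (∀ i, e.repr (s i) k =
        ∑ j, (fun c => e.repr (w i j) c) ⬝ᵥ (B k).mulVec (fun c => e.repr (x j) c)) ∧
    ∃ What : Matrix (Fin M) (Fin N × Fin n) ℝ,
      ∀ i, e.repr (y i) k = ψℝ (What.mulVec φx i + e.repr (bias i) k) := by
  have hsk : ∀ i, e.repr (s i) k =
      ∑ j, (fun c => e.repr (w i j) c) ⬝ᵥ B k *ᵥ fun c => e.repr (x j) c := fun i => by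
    rw [hs i, e.repr_sum_mul_apply mul B hB]
  set What := flattenedWeight (fun i j c => e.repr (w i j) c) (B k)
  have hWhat : ∀ i, (What *ᵥ φx) i = e.repr (s i) k := fun i => by
    rw [hsk i, show φx = fun p => e.repr (x p.1) p.2 from funext fun p => hφx p.1 p.2]
    exact flattenedWeight_mulVec _ _ (fun j c => e.repr (x j) c) i
  refine ⟨hsk, What, fun i => ?_⟩
  rw [hy i, hψ, e.repr_sum_self, hWhat, map_add, Finsupp.add_apply]
end

section
/- For any vector-valued matrix A ∈ V^{M×L} and B ∈ V^{L×N}, the product AB can be recovered as AB = φ^{-1}((Σ_k A_k ⊗ P_k^T) φ(B)), where A = Σ_k A_k e_k. -/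
open Matrix Kronecker

/-
Writing `a = ∑ₖ aₖ eₖ`, bilinearity gives `[a * b] = ∑ₖ aₖ (Pₖ [b])`, where `[·]` are coordinates
and `Pₖ` is the matrix of left multiplication by `eₖ`. Summing over the inner index of the product
`AB`, the coefficient `Aₖ i ℓ` multiplies the `ℓ`-th block `Pₖ [B ℓ j]` of `φ(B)`, which is exactly
the `(i, ·)` block row of `(Aₖ ⊗ Pₖ) φ(B)`.
-/

theorem Matrix.kronecker_mul_apply {R m l ι κ n : Type*} [CommSemiring R] [Fintype l]
    [Fintype κ] (A : Matrix m l R) (P : Matrix ι κ R) (Φ : Matrix (l × κ) n R) (i : m) (c : ι)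
    (j : n) :
    (A ⊗ₖ P * Φ) (i, c) j = ∑ ℓ, A i ℓ * (P *ᵥ fun d => Φ (ℓ, d) j) c := by
  simp only [mul_apply, Fintype.sum_prod_type, kroneckerMap_apply, mulVec, dotProduct,
    Finset.mul_sum, mul_assoc]

theorem Module.Basis.repr_bilin_eq_sum_toMatrix_mulVec {R U V W ι κ μ : Type*} [CommSemiring R]
    [AddCommMonoid U] [AddCommMonoid V] [AddCommMonoid W] [Module R U] [Module R V] [Module R W]
    [Fintype ι] [Fintype κ] [DecidableEq κ] [Finite μ] (e : Basis ι R U) (f : Basis κ R V)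
    (g : Basis μ R W) (mul : U →ₗ[R] V →ₗ[R] W) (a : U) (b : V) :
    ⇑(g.repr (mul a b)) = ∑ k, e.repr a k • (LinearMap.toMatrix f g (mul (e k)) *ᵥ f.repr b) := by
  conv_lhs => rw [← e.sum_repr a]
  simp only [map_sum, map_smul, LinearMap.sum_apply, LinearMap.smul_apply, Finsupp.coe_finsetSum,
    Finsupp.coe_smul, LinearMap.toMatrix_mulVec_repr]

/-- For vector-valued matrices `A ∈ V^{M×L}` and `B ∈ V^{L×N}`, the
product `AB` is recovered as `AB = φ⁻¹((∑ k, A_k ⊗ₖ P_kᵀ) φ(B))`, i.e. the real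
block representation of `AB` equals `(∑ k, A_k ⊗ₖ P_kᵀ) * φ(B)`. -/
theorem stmt_19 {n M L N : ℕ} {V : Type*} [AddCommGroup V] [Module ℝ V]
    (e : Module.Basis (Fin n) ℝ V) (mul : V →ₗ[ℝ] V →ₗ[ℝ] V)
    (A : Matrix (Fin M) (Fin L) V) (B : Matrix (Fin L) (Fin N) V)
    (C : Matrix (Fin M) (Fin N) V)
    (hC : ∀ i j, C i j = ∑ ℓ, mul (A i ℓ) (B ℓ j))
    (Ak : Fin n → Matrix (Fin M) (Fin L) ℝ)
    (hAk : ∀ i ℓ, A i ℓ = ∑ k, Ak k i ℓ • e k)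
    (P : Fin n → Matrix (Fin n) (Fin n) ℝ)
    (hP : ∀ k, P k = Matrix.of fun l j => e.repr (mul (e k) (e j)) l)
    (φB : Matrix (Fin L × Fin n) (Fin N) ℝ)
    (hφB : ∀ ℓ c j, φB (ℓ, c) j = e.repr (B ℓ j) c) :
    (Matrix.of fun q j => e.repr (C q.1 j) q.2 :
        Matrix (Fin M × Fin n) (Fin N) ℝ) = (∑ k, Ak k ⊗ₖ P k) * φB := by
  have hP_toMatrix : ∀ k, P k = LinearMap.toMatrix e e (mul (e k)) := fun k => by
    ext l j; rw [hP, LinearMap.toMatrix_apply, of_apply]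
  have hA_repr : ∀ i ℓ k, e.repr (A i ℓ) k = Ak k i ℓ := fun i ℓ k => by
    rw [hAk, e.repr_sum_self]
  have hφB_block : ∀ ℓ j, (fun d => φB (ℓ, d) j) = ⇑(e.repr (B ℓ j)) :=
    fun ℓ j => funext fun d => hφB ℓ d j
  ext ⟨i, c⟩ j
  simp only [of_apply, hC, map_sum, Finsupp.coe_finsetSum, Finset.sum_apply,
    e.repr_bilin_eq_sum_toMatrix_mulVec e e, Pi.smul_apply, smul_eq_mul, hA_repr,
    Matrix.sum_mul, Matrix.sum_apply, kronecker_mul_apply, hφB_block, hP_toMatrix]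
  exact Finset.sum_comm
end
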